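/- Let X be a real Banach space, x₀ ∈ X, R > 0, and let A satisfy the variable Lipschitz condition on B[x₀,R] with a continuous nonnegative function k on [0,R]. Set a = ‖A x₀ − x₀‖, a₊(r) = a + ∫₀^r k(t) dt, assume a₊ has a fixed point in [0,R], and let r* be its smallest fixed point. Define r₀ = 0, r_{n+1} = a₊(r_n) and x_{n+1} = A x_n starting from x₀. Let ξ₀ ∈ B[x₀,R] with ρ₀ = ‖ξ₀ − x₀‖ and assume either ρ₀ ≤ r*, or a₊(s) < s for all s with r* < s ≤ ρ₀. Define ρ_{n+1} = a₊(ρ_n) and ξ_{n+1} = A ξ_n. Then for all n, ρ_n ≥ r_n and ‖ξ_n − x_n‖ ≤ ρ_n − r_n. -/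

import Mathlib

/-!
Along the segment from `x` to `ξ`, parametrised by `s ∈ [r, ρ]` so that its point at time `s`
lies in `B[x₀, s]` and moves at unit speed at most, the right Dini derivative of `‖A(·) - A x‖` is
at most `k s`; hence `‖A ξ - A x‖ ≤ ∫_r^ρ k = a₊ ρ - a₊ r` whenever `‖x - x₀‖ ≤ r` and
`‖ξ - x‖ ≤ ρ - r`. This one-step estimate (applied also with `x = x₀`, to keep `x_n` in
`B[x₀, r_n]`) propagates the bounds by induction, as long as `r_n` and `ρ_n` stay in `[0, R]`.
They do, because the monotone map `a₊` sends `[0, r*]` and `[0, max ρ₀ r*]` into themselves, the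
latter by the hypothesis on `ρ₀`.
-/

open Set Filter Topology intervalIntegral

def VariableLipschitzOn {X : Type*} [NormedAddCommGroup X] (A : X → X) (x₀ : X) (R : ℝ)
    (k : ℝ → ℝ) : Prop :=
  ∀ x₁ x₂ : X, ∀ r : ℝ, ‖x₁ - x₀‖ ≤ r → ‖x₂ - x₀‖ ≤ r → 0 < r → r ≤ R →
    ‖A x₁ - A x₂‖ ≤ k r * ‖x₁ - x₂‖

noncomputable def majorant {X : Type*} [NormedAddCommGroup X] (A : X → X) (x₀ : X)
    (k : ℝ → ℝ) (r : ℝ) : ℝ :=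
  ‖A x₀ - x₀‖ + ∫ t in (0 : ℝ)..r, k t

section Majorant

variable {X : Type*} [NormedAddCommGroup X] {A : X → X} {x₀ : X} {R : ℝ} {k : ℝ → ℝ}

theorem majorant_sub_majorant (hk : ContinuousOn k (Icc 0 R)) {s t : ℝ} (hs : 0 ≤ s)
    (hst : s ≤ t) (htR : t ≤ R) :
    majorant A x₀ k t - majorant A x₀ k s = ∫ u in s..t, k u := by
  have hint : ∀ {b}, 0 ≤ b → b ≤ R → IntervalIntegrable k MeasureTheory.volume 0 b :=
    fun hb hbR => (hk.mono (Icc_subset_Icc_right hbR)).intervalIntegrable_of_Icc hb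
  rw [majorant, majorant, add_sub_add_left_eq_sub,
    integral_interval_sub_left (hint (hs.trans hst) htR) (hint hs (hst.trans htR))]

theorem monotoneOn_majorant (hk : ContinuousOn k (Icc 0 R)) (hk₀ : ∀ t ∈ Icc 0 R, 0 ≤ k t) :
    MonotoneOn (majorant A x₀ k) (Icc 0 R) := fun s hs t ht hst => by
  rw [← sub_nonneg, majorant_sub_majorant hk hs.1 hst ht.2]
  exact integral_nonneg hst fun u hu => hk₀ u ⟨hs.1.trans hu.1, hu.2.trans ht.2⟩

theorem majorant_zero : majorant A x₀ k 0 = ‖A x₀ - x₀‖ := by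
  simp [majorant]

theorem mapsTo_majorant_Icc (hk : ContinuousOn k (Icc 0 R)) (hk₀ : ∀ t ∈ Icc 0 R, 0 ≤ k t)
    {M : ℝ} (hMR : M ≤ R) (hM : majorant A x₀ k M ≤ M) :
    MapsTo (majorant A x₀ k) (Icc 0 M) (Icc 0 M) :=
  ((monotoneOn_majorant hk hk₀).mono (Icc_subset_Icc_right hMR)).mapsTo_Icc.mono_right
    (Icc_subset_Icc (majorant_zero (A := A) ▸ norm_nonneg _) hM)

end Majorant

namespace VariableLipschitzOn

variable {X : Type*} [NormedAddCommGroup X] {A : X → X} {x₀ : X} {R : ℝ} {k : ℝ → ℝ}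

theorem lipschitzOnWith (hA : VariableLipschitzOn A x₀ R k) {r : ℝ} (hr : 0 < r) (hrR : r ≤ R) :
    LipschitzOnWith (k r).toNNReal A (Metric.closedBall x₀ r) := by
  refine LipschitzOnWith.of_dist_le' fun x₁ hx₁ x₂ hx₂ => ?_
  rw [Metric.mem_closedBall, dist_eq_norm] at hx₁ hx₂
  simpa only [dist_eq_norm] using hA x₁ x₂ r hx₁ hx₂ hr hrR

theorem norm_sub_le_integral_of_lipschitzOnWith (hA : VariableLipschitzOn A x₀ R k) {a b : ℝ}
    (hab : a ≤ b) (hbR : b ≤ R) (hk : ContinuousOn k (Icc a b))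
    (hk₀ : ∀ t ∈ Icc a b, 0 ≤ k t) {y : ℝ → X} (hy : LipschitzOnWith 1 y (Icc a b))
    (hy_ball : ∀ s ∈ Icc a b, ‖y s - x₀‖ ≤ s) :
    ‖A (y b) - A (y a)‖ ≤ ∫ t in a..b, k t := by
  obtain rfl | hab := hab.eq_or_lt
  · simp
  have ha : 0 ≤ a := (norm_nonneg _).trans (hy_ball a (left_mem_Icc.2 hab.le))
  set f : ℝ → ℝ := fun s => ‖A (y s) - A (y a)‖
  have hf : ContinuousOn f (Icc a b) := by
    refine (((hA.lipschitzOnWith (ha.trans_lt hab) hbR).continuousOn.comp hy.continuousOn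
      fun s hs => ?_).sub continuousOn_const).norm
    exact mem_closedBall_iff_norm.2 ((hy_ball s hs).trans hs.2)
  have hB : ∀ s ∈ Icc a b, HasDerivWithinAt (fun u => ∫ t in a..u, k t) (k s) (Icc a b) s :=
    fun s hs => by
      have := Fact.mk hs
      exact integral_hasDerivWithinAt_right
        ((hk.mono (Icc_subset_Icc le_rfl hs.2)).intervalIntegrable_of_Icc hs.1)
        (hk.stronglyMeasurableAtFilter_nhdsWithin measurableSet_Icc s) (hk s hs)
  -- `f z - f s ≤ ‖A (y z) - A (y s)‖ ≤ k z * (z - s)`, and `k z → k s` as `z ↓ s`.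
  have hslope : ∀ s ∈ Ico a b, ∀ c, k s < c → ∃ᶠ z in 𝓝[>] s, slope f s z < c := by
    intro s hs c hc
    have hk_lt : ∀ᶠ z in 𝓝[>] s, k z < c :=
      ((hk s (Ico_subset_Icc_self hs)).mono_of_mem_nhdsWithin
        (Icc_mem_nhdsGT_of_mem hs)).eventually (gt_mem_nhds hc)
    refine ((hk_lt.and (Ioc_mem_nhdsGT hs.2)).mono fun z ⟨hkz, hz⟩ => ?_).frequently
    have hs' : s ∈ Icc a b := Ico_subset_Icc_self hs
    have hz' : z ∈ Icc a b := ⟨hs.1.trans hz.1.le, hz.2⟩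
    have hzs : 0 < z - s := sub_pos.2 hz.1
    have hstep : f z - f s ≤ k z * (z - s) :=
      calc f z - f s ≤ ‖A (y z) - A (y s)‖ := by
            simpa only [f, sub_sub_sub_cancel_right] using
              norm_sub_norm_le (A (y z) - A (y a)) (A (y s) - A (y a))
        _ ≤ k z * ‖y z - y s‖ :=
            hA _ _ z (hy_ball z hz') ((hy_ball s hs').trans hz.1.le) (ha.trans_lt
              (hs.1.trans_lt hz.1)) (hz.2.trans hbR)
        _ ≤ k z * (z - s) := by
            gcongr
            · exact hk₀ z hz'
            · simpa [dist_eq_norm, abs_of_pos hzs] using hy.dist_le_mul z hz' s hs'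
    rw [slope_def_field]
    exact (div_le_of_le_mul₀ hzs.le (hk₀ z hz') hstep).trans_lt hkz
  simpa [f] using image_le_of_liminf_slope_right_le_deriv_boundary hf (by simp [f])
    (fun s hs => (hB s hs).continuousWithinAt)
    (fun s hs => (hB s (Ico_subset_Icc_self hs)).mono_of_mem_nhdsWithin
      (Icc_mem_nhdsGE_of_mem hs)) hslope (right_mem_Icc.2 hab.le)

theorem norm_sub_le_integral [NormedSpace ℝ X] (hA : VariableLipschitzOn A x₀ R k) {r ρ : ℝ}
    (hρR : ρ ≤ R) (hk : ContinuousOn k (Icc r ρ)) (hk₀ : ∀ t ∈ Icc r ρ, 0 ≤ k t) {x ξ : X}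
    (hx : ‖x - x₀‖ ≤ r) (hξ : ‖ξ - x‖ ≤ ρ - r) :
    ‖A ξ - A x‖ ≤ ∫ t in r..ρ, k t := by
  have hrρ : r ≤ ρ := sub_nonneg.1 ((norm_nonneg _).trans hξ)
  have hθ : ‖ξ - x‖ / (ρ - r) ≤ 1 := div_le_one_of_le₀ hξ (sub_nonneg.2 hrρ)
  set y : ℝ → X := fun s => x + ((s - r) / (ρ - r)) • (ξ - x)
  have hy_dist : ∀ s t, ‖y t - y s‖ = |t - s| * (‖ξ - x‖ / (ρ - r)) := fun s t => by
    rw [show y t - y s = ((t - s) / (ρ - r)) • (ξ - x) by simp only [y]; module, norm_smul,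
      Real.norm_eq_abs, abs_div, abs_of_nonneg (sub_nonneg.2 hrρ), div_mul_eq_mul_div,
      mul_div_assoc]
  have hy_ρ : y ρ = ξ := by
    obtain hρr | hρr := eq_or_ne (ρ - r) 0
    · have : ξ = x := by rwa [hρr, norm_le_zero_iff, sub_eq_zero] at hξ
      simp [y, this]
    · simp [y, div_self hρr]
  have hy : LipschitzOnWith 1 y (Icc r ρ) :=
    LipschitzOnWith.mk_one fun t _ s _ => by
      rw [dist_eq_norm, hy_dist, Real.dist_eq]
      exact mul_le_of_le_one_right (abs_nonneg _) hθ
  have hy_ball : ∀ s ∈ Icc r ρ, ‖y s - x₀‖ ≤ s := fun s hs =>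
    calc ‖y s - x₀‖ = ‖(x - x₀) + (y s - y r)‖ := by simp only [y]; congr 1; module
      _ ≤ r + (s - r) := by
        grw [norm_add_le, hx, hy_dist, abs_of_nonneg (sub_nonneg.2 hs.1)]
        gcongr
        exact mul_le_of_le_one_right (sub_nonneg.2 hs.1) hθ
      _ = s := by ring
  simpa [hy_ρ, y] using hA.norm_sub_le_integral_of_lipschitzOnWith hrρ hρR hk hk₀ hy hy_ball

variable [NormedSpace ℝ X]

theorem norm_apply_sub_apply_le (hA : VariableLipschitzOn A x₀ R k)
    (hk : ContinuousOn k (Icc 0 R)) (hk₀ : ∀ t ∈ Icc 0 R, 0 ≤ k t) {r ρ : ℝ} (hr : 0 ≤ r)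
    (hρR : ρ ≤ R) {x ξ : X} (hx : ‖x - x₀‖ ≤ r) (hξ : ‖ξ - x‖ ≤ ρ - r) :
    ‖A ξ - A x‖ ≤ majorant A x₀ k ρ - majorant A x₀ k r := by
  have hrρ : r ≤ ρ := sub_nonneg.1 ((norm_nonneg _).trans hξ)
  rw [majorant_sub_majorant hk hr hrρ hρR]
  exact hA.norm_sub_le_integral hρR (hk.mono (Icc_subset_Icc hr hρR))
    (fun t ht => hk₀ t ⟨hr.trans ht.1, ht.2.trans hρR⟩) hx hξ

theorem norm_apply_sub_le (hA : VariableLipschitzOn A x₀ R k) (hk : ContinuousOn k (Icc 0 R))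
    (hk₀ : ∀ t ∈ Icc 0 R, 0 ≤ k t) {r : ℝ} (hrR : r ≤ R) {x : X} (hx : ‖x - x₀‖ ≤ r) :
    ‖A x - x₀‖ ≤ majorant A x₀ k r :=
  calc ‖A x - x₀‖ ≤ ‖A x - A x₀‖ + ‖A x₀ - x₀‖ := norm_sub_le_norm_sub_add_norm_sub _ _ _
    _ ≤ (majorant A x₀ k r - ‖A x₀ - x₀‖) + ‖A x₀ - x₀‖ := by
        gcongr
        simpa only [majorant_zero] using hA.norm_apply_sub_apply_le hk hk₀ le_rfl hrR
          (by simp : ‖x₀ - x₀‖ ≤ 0) (by simpa using hx)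
    _ = majorant A x₀ k r := sub_add_cancel _ _

end VariableLipschitzOn

theorem Set.MapsTo.mem_of_succ_eq {α : Type*} {g : α → α} {s : Set α} (hg : MapsTo g s s)
    {u : ℕ → α} (h₀ : u 0 ∈ s) (hu : ∀ n, u (n + 1) = g (u n)) : ∀ n, u n ∈ s
  | 0 => h₀
  | n + 1 => hu n ▸ hg (hg.mem_of_succ_eq h₀ hu n)

theorem successive_approximations_comparison_general
    {X : Type*} [NormedAddCommGroup X] [NormedSpace ℝ X]
    (x₀ : X) (R : ℝ) (A : X → X) (k : ℝ → ℝ)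
    (hk_cont : ContinuousOn k (Set.Icc 0 R))
    (hk_nonneg : ∀ t ∈ Set.Icc (0 : ℝ) R, 0 ≤ k t)
    (hLip : ∀ x₁ x₂ : X, ∀ r : ℝ, ‖x₁ - x₀‖ ≤ r → ‖x₂ - x₀‖ ≤ r →
      0 < r → r ≤ R → ‖A x₁ - A x₂‖ ≤ k r * ‖x₁ - x₂‖)
    (a : ℝ) (ha : a = ‖A x₀ - x₀‖)
    (aplus : ℝ → ℝ) (haplus : ∀ r : ℝ, aplus r = a + ∫ t in (0 : ℝ)..r, k t)
    (rstar : ℝ) (hrstar_mem : rstar ∈ Set.Icc (0 : ℝ) R)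
    (hrstar_fix : aplus rstar = rstar)
    (r : ℕ → ℝ) (hr0 : r 0 = 0) (hr_succ : ∀ n : ℕ, r (n + 1) = aplus (r n))
    (x : ℕ → X) (hx0 : x 0 = x₀) (hx_succ : ∀ n : ℕ, x (n + 1) = A (x n))
    (ξ : ℕ → X) (hξ0 : ‖ξ 0 - x₀‖ ≤ R) (hξ_succ : ∀ n : ℕ, ξ (n + 1) = A (ξ n))
    (ρ : ℕ → ℝ) (hρ0 : ρ 0 = ‖ξ 0 - x₀‖) (hρ_succ : ∀ n : ℕ, ρ (n + 1) = aplus (ρ n))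
    (hadm : ρ 0 ≤ rstar ∨ ∀ s : ℝ, rstar < s → s ≤ ρ 0 → aplus s < s) :
    ∀ n : ℕ, r n ≤ ρ n ∧ ‖ξ n - x n‖ ≤ ρ n - r n := by
  have hA : VariableLipschitzOn A x₀ R k := hLip
  obtain rfl : aplus = majorant A x₀ k := funext fun s => by rw [haplus, ha, majorant]
  have hr_mem : ∀ n, r n ∈ Icc 0 rstar :=
    (mapsTo_majorant_Icc hk_cont hk_nonneg hrstar_mem.2 hrstar_fix.le).mem_of_succ_eq
      (by simp [hr0, hrstar_mem.1]) hr_succ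
  set M := max (ρ 0) rstar
  have hMR : M ≤ R := max_le (hρ0 ▸ hξ0) hrstar_mem.2
  have hM_fix : majorant A x₀ k M ≤ M := by
    rcases le_or_gt (ρ 0) rstar with h | h
    · rw [show M = rstar from max_eq_right h, hrstar_fix]
    · rw [show M = ρ 0 from max_eq_left h.le]
      exact (hadm.resolve_left h.not_ge (ρ 0) h le_rfl).le
  have hρ_mem : ∀ n, ρ n ∈ Icc 0 M :=
    (mapsTo_majorant_Icc hk_cont hk_nonneg hMR hM_fix).mem_of_succ_eq
      ⟨hρ0 ▸ norm_nonneg _, le_max_left _ _⟩ hρ_succ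
  have hbounds : ∀ n, ‖x n - x₀‖ ≤ r n ∧ ‖ξ n - x n‖ ≤ ρ n - r n := by
    intro n
    induction n with
    | zero => simp [hr0, hx0, hρ0]
    | succ n ih =>
      have hρR : ρ n ≤ R := (hρ_mem n).2.trans hMR
      rw [hx_succ, hξ_succ, hr_succ, hρ_succ]
      exact ⟨hA.norm_apply_sub_le hk_cont hk_nonneg ((hr_mem n).2.trans hrstar_mem.2) ih.1,
        hA.norm_apply_sub_apply_le hk_cont hk_nonneg (hr_mem n).1 hρR ih.1 ih.2⟩
  exact fun n => ⟨sub_nonneg.1 ((norm_nonneg _).trans (hbounds n).2), (hbounds n).2⟩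

/-- Majorization of the approximations from a general initial point: with
`ρ₀ = ‖ξ₀ - x₀‖`, `ρ_{n+1} = a₊(ρ_n)`, `r₀ = 0`, `r_{n+1} = a₊(r_n)`,
`x_{n+1} = A x_n` and `ξ_{n+1} = A ξ_n`, one has `ρ_n ≥ r_n` and
`‖ξ_n - x_n‖ ≤ ρ_n - r_n` for all `n`. -/
theorem successive_approximations_comparison
    {X : Type*} [NormedAddCommGroup X] [NormedSpace ℝ X] [CompleteSpace X]
    (x₀ : X) (R : ℝ) (hR : 0 < R) (A : X → X) (k : ℝ → ℝ)
    (hk_cont : ContinuousOn k (Set.Icc 0 R))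
    (hk_nonneg : ∀ t ∈ Set.Icc (0 : ℝ) R, 0 ≤ k t)
    (hLip : ∀ x₁ x₂ : X, ∀ r : ℝ, ‖x₁ - x₀‖ ≤ r → ‖x₂ - x₀‖ ≤ r →
      0 < r → r ≤ R → ‖A x₁ - A x₂‖ ≤ k r * ‖x₁ - x₂‖)
    (a : ℝ) (ha : a = ‖A x₀ - x₀‖)
    (aplus : ℝ → ℝ) (haplus : ∀ r : ℝ, aplus r = a + ∫ t in (0 : ℝ)..r, k t)
    (rstar : ℝ) (hrstar_mem : rstar ∈ Set.Icc (0 : ℝ) R)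
    (hrstar_fix : aplus rstar = rstar)
    (hrstar_min : ∀ s ∈ Set.Icc (0 : ℝ) R, aplus s = s → rstar ≤ s)
    (r : ℕ → ℝ) (hr0 : r 0 = 0) (hr_succ : ∀ n : ℕ, r (n + 1) = aplus (r n))
    (x : ℕ → X) (hx0 : x 0 = x₀) (hx_succ : ∀ n : ℕ, x (n + 1) = A (x n))
    (ξ : ℕ → X) (hξ0 : ‖ξ 0 - x₀‖ ≤ R) (hξ_succ : ∀ n : ℕ, ξ (n + 1) = A (ξ n))
    (ρ : ℕ → ℝ) (hρ0 : ρ 0 = ‖ξ 0 - x₀‖) (hρ_succ : ∀ n : ℕ, ρ (n + 1) = aplus (ρ n))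
    (hadm : ρ 0 ≤ rstar ∨ ∀ s : ℝ, rstar < s → s ≤ ρ 0 → aplus s < s) :
    ∀ n : ℕ, r n ≤ ρ n ∧ ‖ξ n - x n‖ ≤ ρ n - r n :=
  successive_approximations_comparison_general x₀ R A k hk_cont hk_nonneg hLip a ha aplus haplus
    rstar hrstar_mem hrstar_fix r hr0 hr_succ x hx0 hx_succ ξ hξ0 hξ_succ ρ hρ0 hρ_succ hadm
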